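/- Let k ≥ 1 and k_0 ≥ 0 be integers, let n ≥ k + k_0 be an integer, and let a > 0, b > 0 and ρ ≥ b/(b+n) be real numbers. For Q ∈ (0, 1], define B(Q) = a·(ρ(n+b))^{−k/2} · ∫_0^1 λ^{a+k/2−1} · [1 − ((b−1)/(ρ(b+n)))λ]^{(n−k−k_0)/2} · [Q·(1 − bλ/(ρ(b+n))) + λ/(ρ(b+n))]^{−(n−k_0)/2} dλ. Then B(Q) → ∞ as Q → 0⁺ if and only if n ≥ k + k_0 + 2a. -/

import Mathlib

open MeasureTheory Filter Topology Real

/-- The Bayes factor of a model with `k` extra regressors against the null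
model under the robust prior, as a function of `Q = SSEᵢ/SSE₀`. -/
noncomputable def robustBayesFactor (k k0 n : ℕ) (a b ρ : ℝ) (Q : ℝ) : ℝ :=
  a * (ρ * ((n : ℝ) + b)) ^ (-(k : ℝ) / 2) *
    ∫ l in Set.Ioo (0:ℝ) 1,
      l ^ (a + (k : ℝ) / 2 - 1) *
        (1 - ((b - 1) / (ρ * (b + (n : ℝ)))) * l) ^ (((n : ℝ) - (k : ℝ) - (k0 : ℝ)) / 2) *
        (Q * (1 - b * l / (ρ * (b + (n : ℝ)))) + l / (ρ * (b + (n : ℝ)))) ^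
          (-(((n : ℝ) - (k0 : ℝ)) / 2))

open Set

/-!
Write `c = ρ(b+n)`, `p = a + k/2 - 1`, `s = (n-k-k₀)/2` and `r = (n-k₀)/2`, so that the integrand
is `λ^p (1 - (b-1)λ/c)^s (Q(1 - bλ/c) + λ/c)^(-r)`. Both brackets are affine in `λ`, hence lie
between their endpoint values on `[0,1]`; since `b ≤ c`, the first is bounded above and below by
positive constants and the second lies between `λ/c` and `Q + λ/c`. So the integrand is
`O(λ^(p-r))` uniformly in `Q`, and `B` stays bounded when `p - r > -1`. When `p - r ≤ -1`, on
`(cQ, 1)` the second bracket is at most `2λ/c`, the integrand is at least a constant times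
`λ^(p-r) ≥ λ⁻¹`, and `B(Q) ≳ -log(cQ) → ∞`. Finally `p - r ≤ -1` is `k + k₀ + 2a ≤ n`.
-/

theorem tendsto_neg_log_const_mul_nhdsGT {c : ℝ} (hc : 0 < c) :
    Tendsto (fun Q => -log (c * Q)) (𝓝[>] 0) atTop :=
  tendsto_neg_atBot_atTop.comp <| tendsto_log_nhdsGT_zero.comp <|
    tendsto_nhdsWithin_of_tendsto_nhds_of_eventually_within _
      (((continuous_const_mul c).tendsto' 0 0 (mul_zero c)).mono_left nhdsWithin_le_nhds)
      (eventually_mem_nhdsWithin.mono fun _ hQ => mul_pos hc hQ)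

theorem min_le_add_sub_mul {x y l : ℝ} (hl0 : 0 ≤ l) (hl1 : l ≤ 1) :
    min x y ≤ x + (y - x) * l :=
  (Convex.min_le_combo x y (sub_nonneg.2 hl1) hl0 (sub_add_cancel 1 l)).trans_eq
    (by simp only [smul_eq_mul]; ring)

theorem add_sub_mul_le_max {x y l : ℝ} (hl0 : 0 ≤ l) (hl1 : l ≤ 1) :
    x + (y - x) * l ≤ max x y :=
  (Convex.combo_le_max x y (sub_nonneg.2 hl1) hl0 (sub_add_cancel 1 l)).trans_eq'
    (by simp only [smul_eq_mul]; ring)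

section UnitInterval

variable {f : ℝ → ℝ} {A q : ℝ}

theorem integral_Ioo_zero_one_rpow (hq : -1 < q) :
    ∫ l in Ioo (0 : ℝ) 1, l ^ q = 1 / (q + 1) := by
  rw [← integral_Ioc_eq_integral_Ioo, ← intervalIntegral.integral_of_le zero_le_one,
    integral_rpow (Or.inl hq), one_rpow, zero_rpow (by linarith), sub_zero]

theorem integrableOn_Ioo_of_le_const_mul_rpow (hq : -1 < q) (hf : ContinuousOn f (Ioo 0 1))
    (hle : ∀ l ∈ Ioo (0 : ℝ) 1, ‖f l‖ ≤ A * l ^ q) : IntegrableOn f (Ioo 0 1) :=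
  (((intervalIntegral.integrableOn_Ioo_rpow_iff one_pos).2 hq).const_mul A).mono'
    (hf.aestronglyMeasurable measurableSet_Ioo)
    (ae_restrict_of_forall_mem measurableSet_Ioo hle)

theorem setIntegral_Ioo_le_of_le_const_mul_rpow (hq : -1 < q)
    (hf0 : ∀ l ∈ Ioo (0 : ℝ) 1, 0 ≤ f l) (hle : ∀ l ∈ Ioo (0 : ℝ) 1, f l ≤ A * l ^ q) :
    ∫ l in Ioo 0 1, f l ≤ A / (q + 1) :=
  calc ∫ l in Ioo 0 1, f l ≤ ∫ l in Ioo 0 1, A * l ^ q :=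
        integral_mono_of_nonneg (ae_restrict_of_forall_mem measurableSet_Ioo hf0)
          (((intervalIntegral.integrableOn_Ioo_rpow_iff one_pos).2 hq).const_mul A)
          (ae_restrict_of_forall_mem measurableSet_Ioo hle)
    _ = A / (q + 1) := by rw [integral_const_mul, integral_Ioo_zero_one_rpow hq, mul_one_div]

theorem mul_neg_log_le_setIntegral_Ioo {ε K : ℝ} (hε : 0 < ε) (hε1 : ε ≤ 1)
    (hf : IntegrableOn f (Ioo 0 1)) (hf0 : ∀ l ∈ Ioo (0 : ℝ) 1, 0 ≤ f l)
    (hle : ∀ l ∈ Ioo ε 1, K * l⁻¹ ≤ f l) : K * -log ε ≤ ∫ l in Ioo 0 1, f l := by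
  have hsub : Ioo ε 1 ⊆ Ioo 0 1 := Ioo_subset_Ioo_left hε.le
  have hinv : IntegrableOn (fun l => K * l⁻¹) (Ioo ε 1) :=
    ((continuousOn_inv₀.mono fun l hl => (hε.trans_le hl.1).ne').const_smul K
      |>.integrableOn_Icc).mono_set Ioo_subset_Icc_self
  calc K * -log ε = ∫ l in Ioo ε 1, K * l⁻¹ := by
        rw [← integral_Ioc_eq_integral_Ioo, ← intervalIntegral.integral_of_le hε1,
          intervalIntegral.integral_const_mul, integral_inv_of_pos hε one_pos, one_div,
          log_inv]
    _ ≤ ∫ l in Ioo ε 1, f l := setIntegral_mono_on hinv (hf.mono_set hsub) measurableSet_Ioo hle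
    _ ≤ ∫ l in Ioo 0 1, f l :=
        setIntegral_mono_set hf (ae_restrict_of_forall_mem measurableSet_Ioo hf0)
          hsub.eventuallyLE

end UnitInterval

namespace RobustBayesFactor

noncomputable def priorFactor (b c l : ℝ) : ℝ := 1 - (b - 1) / c * l

noncomputable def fitFactor (b c Q l : ℝ) : ℝ := Q * (1 - b * l / c) + l / c

noncomputable def integrand (p s r b c Q l : ℝ) : ℝ :=
  l ^ p * priorFactor b c l ^ s * fitFactor b c Q l ^ (-r)

theorem robustBayesFactor_eq_const_mul_integral (k k0 n : ℕ) (a b ρ : ℝ) :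
    robustBayesFactor k k0 n a b ρ = fun Q => a * (ρ * (n + b)) ^ (-(k : ℝ) / 2) *
      ∫ l in Ioo 0 1,
        integrand (a + k / 2 - 1) ((n - k - k0) / 2) ((n - k0) / 2) b (ρ * (b + n)) Q l :=
  rfl

variable {p s r b c Q l : ℝ}

theorem priorFactor_eq (b c l : ℝ) : priorFactor b c l = 1 + (priorFactor b c 1 - 1) * l := by
  unfold priorFactor; ring

theorem fitFactor_eq (b c Q l : ℝ) : fitFactor b c Q l = Q + (fitFactor b c Q 1 - Q) * l := by
  unfold fitFactor; ring

theorem min_one_inv_le_priorFactor (hc : 0 < c) (hbc : b ≤ c) (hl0 : 0 ≤ l) (hl1 : l ≤ 1) :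
    min 1 c⁻¹ ≤ priorFactor b c l := by
  have h1 : c⁻¹ ≤ priorFactor b c 1 := by
    have : priorFactor b c 1 = c⁻¹ + (c - b) / c := by unfold priorFactor; field_simp; ring
    rw [this]; linarith [div_nonneg (sub_nonneg.2 hbc) hc.le]
  exact (min_le_min_left 1 h1).trans
    ((min_le_add_sub_mul hl0 hl1).trans_eq (priorFactor_eq b c l).symm)

theorem priorFactor_pos (hc : 0 < c) (hbc : b ≤ c) (hl0 : 0 ≤ l) (hl1 : l ≤ 1) :
    0 < priorFactor b c l :=
  (lt_min one_pos (inv_pos.2 hc)).trans_le (min_one_inv_le_priorFactor hc hbc hl0 hl1)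

theorem priorFactor_le_max (hl0 : 0 ≤ l) (hl1 : l ≤ 1) :
    priorFactor b c l ≤ max 1 (priorFactor b c 1) :=
  (priorFactor_eq b c l).trans_le (add_sub_mul_le_max hl0 hl1)

theorem div_le_fitFactor (hQ : 0 ≤ Q) (hc : 0 < c) (hbc : b ≤ c) (hl0 : 0 ≤ l) (hl1 : l ≤ 1) :
    l / c ≤ fitFactor b c Q l := by
  have : 0 ≤ 1 - b * l / c := by
    rw [sub_nonneg, div_le_one hc]; nlinarith
  unfold fitFactor; nlinarith

theorem fitFactor_pos (hQ : 0 ≤ Q) (hc : 0 < c) (hbc : b ≤ c) (hl0 : 0 < l) (hl1 : l ≤ 1) :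
    0 < fitFactor b c Q l :=
  (div_pos hl0 hc).trans_le (div_le_fitFactor hQ hc hbc hl0.le hl1)

theorem min_inv_le_fitFactor (hQ : 0 ≤ Q) (hc : 0 < c) (hbc : b ≤ c) (hl0 : 0 ≤ l)
    (hl1 : l ≤ 1) :
    min Q c⁻¹ ≤ fitFactor b c Q l :=
  (min_le_min_left Q (by simpa using div_le_fitFactor hQ hc hbc zero_le_one le_rfl)).trans
    ((min_le_add_sub_mul hl0 hl1).trans_eq (fitFactor_eq b c Q l).symm)

theorem fitFactor_le (hQ : 0 ≤ Q) (hb : 0 ≤ b) (hc : 0 < c) (hl0 : 0 ≤ l) :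
    fitFactor b c Q l ≤ Q + l / c := by
  unfold fitFactor
  have : 0 ≤ b * l / c := by positivity
  nlinarith

theorem integrand_nonneg (hc : 0 < c) (hbc : b ≤ c) (hQ : 0 ≤ Q) (hl : l ∈ Ioo 0 1) :
    0 ≤ integrand p s r b c Q l := by
  obtain ⟨hl0, hl1⟩ := hl
  have := priorFactor_pos hc hbc hl0.le hl1.le
  have := fitFactor_pos hQ hc hbc hl0 hl1.le
  unfold integrand; positivity

theorem integrand_le_rpow_sub (hs : 0 ≤ s) (hr : 0 ≤ r) (hc : 0 < c) (hbc : b ≤ c) (hQ : 0 ≤ Q)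
    (hl : l ∈ Ioo 0 1) :
    integrand p s r b c Q l ≤ max 1 (priorFactor b c 1) ^ s * c ^ r * l ^ (p - r) := by
  obtain ⟨hl0, hl1⟩ := hl
  have := priorFactor_pos hc hbc hl0.le hl1.le
  have := fitFactor_pos hQ hc hbc hl0 hl1.le
  calc integrand p s r b c Q l ≤ l ^ p * max 1 (priorFactor b c 1) ^ s * (l / c) ^ (-r) := by
        unfold integrand
        gcongr l ^ p * ?_ ^ s * ?_
        · exact priorFactor_le_max hl0.le hl1.le
        · exact rpow_le_rpow_of_nonpos (div_pos hl0 hc)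
            (div_le_fitFactor hQ hc hbc hl0.le hl1.le) (neg_nonpos.2 hr)
    _ = max 1 (priorFactor b c 1) ^ s * c ^ r * l ^ (p - r) := by
        rw [div_rpow hl0.le hc.le, rpow_neg hl0.le, rpow_neg hc.le, rpow_sub hl0]
        field_simp

theorem integrand_le_rpow (hs : 0 ≤ s) (hr : 0 ≤ r) (hc : 0 < c) (hbc : b ≤ c) (hQ : 0 < Q)
    (hl : l ∈ Ioo 0 1) :
    integrand p s r b c Q l ≤ max 1 (priorFactor b c 1) ^ s * min Q c⁻¹ ^ (-r) * l ^ p := by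
  obtain ⟨hl0, hl1⟩ := hl
  have := priorFactor_pos hc hbc hl0.le hl1.le
  have := fitFactor_pos hQ.le hc hbc hl0 hl1.le
  calc integrand p s r b c Q l
      ≤ l ^ p * max 1 (priorFactor b c 1) ^ s * min Q c⁻¹ ^ (-r) := by
        unfold integrand
        gcongr l ^ p * ?_ ^ s * ?_
        · exact priorFactor_le_max hl0.le hl1.le
        · exact rpow_le_rpow_of_nonpos (lt_min hQ (inv_pos.2 hc))
            (min_inv_le_fitFactor hQ.le hc hbc hl0.le hl1.le) (neg_nonpos.2 hr)
    _ = max 1 (priorFactor b c 1) ^ s * min Q c⁻¹ ^ (-r) * l ^ p := by ring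

theorem inv_le_integrand (hpr : p - r ≤ -1) (hs : 0 ≤ s) (hr : 0 ≤ r) (hb : 0 ≤ b) (hc : 0 < c)
    (hbc : b ≤ c) (hQ : 0 ≤ Q) (hQl : c * Q ≤ l) (hl0 : 0 < l) (hl1 : l ≤ 1) :
    min 1 c⁻¹ ^ s * (2 / c) ^ (-r) * l⁻¹ ≤ integrand p s r b c Q l := by
  have hprior := min_one_inv_le_priorFactor hc hbc hl0.le hl1
  have := priorFactor_pos hc hbc hl0.le hl1
  have := fitFactor_pos hQ hc hbc hl0 hl1
  have hfit : fitFactor b c Q l ≤ 2 / c * l := by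
    have hQl' : Q ≤ l / c := by rwa [le_div_iff₀ hc, mul_comm]
    linarith [fitFactor_le (b := b) hQ hb hc hl0.le, show l / c + l / c = 2 / c * l by ring]
  calc min 1 c⁻¹ ^ s * (2 / c) ^ (-r) * l⁻¹
      ≤ min 1 c⁻¹ ^ s * (2 / c) ^ (-r) * l ^ (p - r) := by
        gcongr
        rw [← rpow_neg_one]
        exact rpow_le_rpow_of_exponent_ge hl0 hl1 hpr
    _ = l ^ p * min 1 c⁻¹ ^ s * (2 / c * l) ^ (-r) := by
        rw [mul_rpow (by positivity) hl0.le, rpow_sub hl0, rpow_neg hl0.le]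
        ring
    _ ≤ integrand p s r b c Q l := by
        unfold integrand
        gcongr l ^ p * ?_ ^ s * ?_
        exact rpow_le_rpow_of_nonpos (by positivity) hfit (neg_nonpos.2 hr)

theorem continuousOn_integrand (hc : 0 < c) (hbc : b ≤ c) (hQ : 0 ≤ Q) :
    ContinuousOn (integrand p s r b c Q) (Ioo 0 1) := by
  refine ((continuousOn_id.rpow_const fun l hl => Or.inl hl.1.ne').mul
    (ContinuousOn.rpow_const (by unfold priorFactor; fun_prop) fun l hl => Or.inl ?_)).mul
    (ContinuousOn.rpow_const (by unfold fitFactor; fun_prop) fun l hl => Or.inl ?_)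
  · exact (priorFactor_pos hc hbc hl.1.le hl.2.le).ne'
  · exact (fitFactor_pos hQ hc hbc hl.1 hl.2.le).ne'

theorem integrableOn_integrand (hp : -1 < p) (hs : 0 ≤ s) (hr : 0 ≤ r) (hc : 0 < c)
    (hbc : b ≤ c) (hQ : 0 < Q) : IntegrableOn (integrand p s r b c Q) (Ioo 0 1) :=
  integrableOn_Ioo_of_le_const_mul_rpow hp (continuousOn_integrand hc hbc hQ.le) fun l hl => by
    rw [norm_of_nonneg (integrand_nonneg hc hbc hQ.le hl)]
    exact integrand_le_rpow hs hr hc hbc hQ hl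

theorem tendsto_integral_integrand_atTop_iff (hp : -1 < p) (hs : 0 ≤ s) (hr : 0 ≤ r)
    (hb : 0 ≤ b) (hc : 0 < c) (hbc : b ≤ c) :
    Tendsto (fun Q => ∫ l in Ioo 0 1, integrand p s r b c Q l) (𝓝[Ioc 0 1] 0) atTop ↔
      p - r ≤ -1 := by
  constructor
  · intro h
    by_contra! hpr
    have : (𝓝[Ioc (0 : ℝ) 1] 0).NeBot := left_nhdsWithin_Ioc_neBot one_pos
    refine not_isBoundedUnder_of_tendsto_atTop h (isBoundedUnder_of_eventually_le
      (a := max 1 (priorFactor b c 1) ^ s * c ^ r / (p - r + 1)) ?_)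
    filter_upwards [self_mem_nhdsWithin] with Q hQ
    exact setIntegral_Ioo_le_of_le_const_mul_rpow hpr
      (fun l hl => integrand_nonneg hc hbc hQ.1.le hl)
      fun l hl => integrand_le_rpow_sub hs hr hc hbc hQ.1.le hl
  · intro hpr
    have hK : 0 < min 1 c⁻¹ ^ s * (2 / c) ^ (-r) := by positivity
    have hlog := ((tendsto_neg_log_const_mul_nhdsGT hc).const_mul_atTop hK).mono_left
      (nhdsWithin_mono 0 (Ioc_subset_Ioi_self : Ioc (0 : ℝ) 1 ⊆ Ioi 0))
    have hsmall : ∀ᶠ Q in 𝓝[Ioc (0 : ℝ) 1] 0, c * Q ≤ 1 :=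
      (((continuous_const_mul c).tendsto' 0 0 (mul_zero c)).eventually
        (eventually_le_nhds one_pos)).filter_mono nhdsWithin_le_nhds
    refine tendsto_atTop_mono' _ ?_ hlog
    filter_upwards [self_mem_nhdsWithin, hsmall] with Q hQ hcQ
    exact mul_neg_log_le_setIntegral_Ioo (mul_pos hc hQ.1) hcQ
      (integrableOn_integrand hp hs hr hc hbc hQ.1)
      (fun l hl => integrand_nonneg hc hbc hQ.1.le hl)
      fun l hl => inv_le_integrand hpr hs hr hb hc hbc hQ.1.le hl.1.le
        ((mul_pos hc hQ.1).trans hl.1) hl.2.le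

end RobustBayesFactor

theorem robust_information_consistency_iff_general
    (k k0 n : ℕ) (hn : k + k0 ≤ n)
    (a b ρ : ℝ) (ha : 0 < a) (hb : 0 < b) (hρ : b / (b + (n : ℝ)) ≤ ρ) :
    Tendsto (robustBayesFactor k k0 n a b ρ) (𝓝[Set.Ioc (0:ℝ) 1] 0) atTop ↔
      (k : ℝ) + (k0 : ℝ) + 2 * a ≤ (n : ℝ) := by
  have hbn : 0 < b + n := by positivity
  have hc : 0 < ρ * (b + n) := mul_pos ((div_pos hb hbn).trans_le hρ) hbn
  have hbc : b ≤ ρ * (b + n) := (div_le_iff₀ hbn).1 hρ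
  have hC : 0 < a * (ρ * (n + b)) ^ (-(k : ℝ) / 2) :=
    mul_pos ha (rpow_pos_of_pos (by rwa [add_comm (n : ℝ)]) _)
  have hk : (0 : ℝ) ≤ k := k.cast_nonneg
  have hn' : (k : ℝ) + k0 ≤ n := by exact_mod_cast hn
  rw [RobustBayesFactor.robustBayesFactor_eq_const_mul_integral,
    tendsto_const_mul_atTop_of_pos hC, RobustBayesFactor.tendsto_integral_integrand_atTop_iff
      (by linarith) (by linarith) (by linarith) hb.le hc hbc]
  constructor <;> intro h <;> linarith

/-- Result 7 of the paper: the robust prior is information consistent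
(`B(Q) → ∞` as `Q → 0⁺`) if and only if `n ≥ k + k₀ + 2a`. -/
theorem robust_information_consistency_iff
    (k k0 n : ℕ) (hk : 1 ≤ k) (hn : k + k0 ≤ n)
    (a b ρ : ℝ) (ha : 0 < a) (hb : 0 < b) (hρ : b / (b + (n : ℝ)) ≤ ρ) :
    Tendsto (robustBayesFactor k k0 n a b ρ) (𝓝[Set.Ioc (0:ℝ) 1] 0) atTop ↔
      (k : ℝ) + (k0 : ℝ) + 2 * a ≤ (n : ℝ) :=
  robust_information_consistency_iff_general k k0 n hn a b ρ ha hb hρ
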